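/- (The population medoid solves a constrained min k-cut.) Let θ : Fin n → Fin n → ℝ be any weight function, let C : Fin n → Fin n → ℝ be any matrix (the population centroid), and define edge weights s i j = (1/2) * θ i j * (2 * C i j − 1). Let 𝒮 be any set of binary matrices (the valid redistricting maps). Then for A₀ ∈ 𝒮: dsq_θ(A₀, C) ≤ dsq_θ(A, C) for all A ∈ 𝒮 if and only if ∑_{i,j} s i j * (1 − A₀ i j) ≤ ∑_{i,j} s i j * (1 − A i j) for all A ∈ 𝒮; i.e. A₀ minimizes dsq_θ(·, C) over 𝒮 if and only if its complement minimizes the cut objective ∑_{i,j} s i j * B i j over complements of maps in 𝒮. -/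

import Mathlib

open Finset

/-- The squared version dsq_θ of the weighted distance. -/
noncomputable def dsqTheta {n : ℕ} (θ A₁ A₂ : Fin n → Fin n → ℝ) : ℝ :=
  (1 / 2) * ∑ i : Fin n, ∑ j : Fin n, θ i j * (A₁ i j - A₂ i j) ^ 2

/-- A matrix is binary if all its entries are 0 or 1. -/
def IsBinary {n : ℕ} (A : Fin n → Fin n → ℝ) : Prop :=
  ∀ i j, A i j ∈ ({0, 1} : Set ℝ)

/-!
For a 0/1 entry `a` we have `a ^ 2 = a`, so `(a - c) ^ 2` is affine in `a`; rewritten in terms of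
the complementary entry `1 - a` it is `(2 c - 1) (1 - a)` plus a term depending on `c` alone.
Summed with the weights `θ / 2`, `dsq_θ(A, C)` is the cut objective of the complement of `A` plus
a constant independent of `A`, so both problems have the same minimizers over any set of binary maps.
-/

theorem IsIdempotentElem.sub_sq_eq {R : Type*} [CommRing R] {a : R} (ha : IsIdempotentElem a)
    (c : R) : (a - c) ^ 2 = (2 * c - 1) * (1 - a) + (c ^ 2 - (2 * c - 1)) := by
  linear_combination ha.eq

theorem isIdempotentElem_of_mem_zero_one {a : ℝ} (ha : a ∈ ({0, 1} : Set ℝ)) :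
    IsIdempotentElem a := by
  rcases ha with rfl | rfl
  exacts [.zero, .one]

section

variable {n : ℕ} (θ C : Fin n → Fin n → ℝ)

noncomputable def cutObjective (B : Fin n → Fin n → ℝ) : ℝ :=
  ∑ i : Fin n, ∑ j : Fin n, ((1 / 2) * θ i j * (2 * C i j - 1)) * B i j

theorem dsqTheta_eq_cutObjective_add {A : Fin n → Fin n → ℝ} (hA : IsBinary A) :
    dsqTheta θ A C = cutObjective θ C (fun i j ↦ 1 - A i j) +
      ∑ i : Fin n, ∑ j : Fin n, (1 / 2) * θ i j * (C i j ^ 2 - (2 * C i j - 1)) := by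
  simp only [dsqTheta, cutObjective, mul_sum, ← sum_add_distrib]
  refine sum_congr rfl fun i _ ↦ sum_congr rfl fun j _ ↦ ?_
  rw [(isIdempotentElem_of_mem_zero_one (hA i j)).sub_sq_eq]
  ring

end

/-- The population medoid solves a constrained min k-cut: over any set 𝒮 of valid binary
maps, A₀ minimizes dsq_θ(·, C) iff its complement minimizes the cut objective with edge
weights `s i j = (1/2) θ i j (2 C i j - 1)`. -/
theorem medoid_iff_min_k_cut {n : ℕ} (θ C : Fin n → Fin n → ℝ)
    (𝒮 : Set (Fin n → Fin n → ℝ)) (h𝒮 : ∀ A ∈ 𝒮, IsBinary A)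
    (A₀ : Fin n → Fin n → ℝ) (hA₀ : A₀ ∈ 𝒮) :
    (∀ A ∈ 𝒮, dsqTheta θ A₀ C ≤ dsqTheta θ A C) ↔
      (∀ A ∈ 𝒮,
        ∑ i : Fin n, ∑ j : Fin n,
            ((1 / 2) * θ i j * (2 * C i j - 1)) * (1 - A₀ i j) ≤
          ∑ i : Fin n, ∑ j : Fin n,
            ((1 / 2) * θ i j * (2 * C i j - 1)) * (1 - A i j)) := by
  refine forall₂_congr fun A hA ↦ ?_
  rw [dsqTheta_eq_cutObjective_add θ C (h𝒮 A₀ hA₀), dsqTheta_eq_cutObjective_add θ C (h𝒮 A hA)]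
  exact add_le_add_iff_right _
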